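/- Let τ ≥ 0, α, μ > 0 with α < 2μ, and v : [0,1] × [τ,∞) → ℝ twice continuously differentiable with v_tt(x,t) = v_xx(x,t) on (0,1) × (τ,∞). Suppose there exists M > 0 such that ∫₀¹ [v_x(x,t)² + v_t(x,t)²] dx ≤ M²·e^{−2μt} for all t ≥ τ. Then ∫_τ^∞ e^{αt}·[v_x(1,t)² + v_t(1,t)²] dt < ∞. -/

import Mathlib

open Set MeasureTheory intervalIntegral

noncomputable section BTWaux

variable (v : ℝ → ℝ → ℝ)

def BTW_w : ℝ × ℝ → (ℝ × ℝ →L[ℝ] ℝ) := fderiv ℝ (Function.uncurry v)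
def BTW_w2 : ℝ × ℝ → (ℝ × ℝ →L[ℝ] (ℝ × ℝ →L[ℝ] ℝ)) := fderiv ℝ (BTW_w v)
def BTW_vx (p : ℝ × ℝ) : ℝ := BTW_w v p (1, 0)
def BTW_vt (p : ℝ × ℝ) : ℝ := BTW_w v p (0, 1)
def BTW_P (p : ℝ × ℝ) : ℝ :=
  BTW_w2 v p (0,1) (1,0) * BTW_vt v p + BTW_vx v p * BTW_w2 v p (0,1) (0,1)

variable {v} (hv : ContDiff ℝ 2 (Function.uncurry v))
include hv

lemma BTW_du : Differentiable ℝ (Function.uncurry v) := hv.differentiable two_ne_zero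
lemma BTW_wC1 : ContDiff ℝ 1 (BTW_w v) := hv.fderiv_right (by norm_num)
lemma BTW_dw : Differentiable ℝ (BTW_w v) := (BTW_wC1 hv).differentiable one_ne_zero
lemma BTW_w2c : Continuous (BTW_w2 v) := (BTW_wC1 hv).continuous_fderiv one_ne_zero

lemma BTW_hx (x t : ℝ) : HasDerivAt (fun y => v y t) (BTW_vx v (x, t)) x := by
  have h1 : HasDerivAt (fun y : ℝ => ((y, t) : ℝ × ℝ)) (1, 0) x :=
    HasDerivAt.prodMk (hasDerivAt_id x) (hasDerivAt_const x t)
  exact (BTW_du hv (x, t)).hasFDerivAt.comp_hasDerivAt x h1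

lemma BTW_ht (x t : ℝ) : HasDerivAt (v x) (BTW_vt v (x, t)) t := by
  have h1 : HasDerivAt (fun s : ℝ => ((x, s) : ℝ × ℝ)) (0, 1) t :=
    HasDerivAt.prodMk (hasDerivAt_const t x) (hasDerivAt_id t)
  exact (BTW_du hv (x, t)).hasFDerivAt.comp_hasDerivAt t h1

lemma BTW_hwdir (x t : ℝ) (q : ℝ × ℝ) :
    HasDerivAt (fun s : ℝ => BTW_w v (x, s) q) (BTW_w2 v (x, t) (0,1) q) t := by
  have h1 : HasDerivAt (fun s : ℝ => ((x, s) : ℝ × ℝ)) (0, 1) t :=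
    HasDerivAt.prodMk (hasDerivAt_const t x) (hasDerivAt_id t)
  have h2 : HasDerivAt (fun s : ℝ => BTW_w v (x, s)) (BTW_w2 v (x, t) (0,1)) t :=
    (BTW_dw hv (x, t)).hasFDerivAt.comp_hasDerivAt t h1
  simpa using h2.clm_apply (hasDerivAt_const t q)

lemma BTW_hwdirx (x t : ℝ) (q : ℝ × ℝ) :
    HasDerivAt (fun y : ℝ => BTW_w v (y, t) q) (BTW_w2 v (x, t) (1,0) q) x := by
  have h1 : HasDerivAt (fun y : ℝ => ((y, t) : ℝ × ℝ)) (1, 0) x :=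
    HasDerivAt.prodMk (hasDerivAt_id x) (hasDerivAt_const x t)
  have h2 : HasDerivAt (fun y : ℝ => BTW_w v (y, t)) (BTW_w2 v (x, t) (1,0)) x :=
    (BTW_dw hv (x, t)).hasFDerivAt.comp_hasDerivAt x h1
  simpa using h2.clm_apply (hasDerivAt_const x q)

lemma BTW_hvt_t (x t : ℝ) :
    HasDerivAt (fun s => BTW_vt v (x, s)) (BTW_w2 v (x, t) (0,1) (0,1)) t :=
  BTW_hwdir hv x t (0,1)

lemma BTW_hvx_x (x t : ℝ) :
    HasDerivAt (fun y => BTW_vx v (y, t)) (BTW_w2 v (x, t) (1,0) (1,0)) x :=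
  BTW_hwdirx hv x t (1,0)

lemma BTW_symm (p : ℝ × ℝ) (a b : ℝ × ℝ) : BTW_w2 v p a b = BTW_w2 v p b a :=
  second_derivative_symmetric (fun y => (BTW_du hv y).hasFDerivAt)
    ((BTW_dw hv p).hasFDerivAt) a b

lemma BTW_vxc : Continuous (BTW_vx v) :=
  ((BTW_wC1 hv).continuous).clm_apply continuous_const
lemma BTW_vtc : Continuous (BTW_vt v) :=
  ((BTW_wC1 hv).continuous).clm_apply continuous_const

lemma BTW_Pc : Continuous (BTW_P v) := by
  have h1 : Continuous fun p => BTW_w2 v p (0,1) (1,0) :=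
    ((BTW_w2c hv).clm_apply continuous_const).clm_apply continuous_const
  have h2 : Continuous fun p => BTW_w2 v p (0,1) (0,1) :=
    ((BTW_w2c hv).clm_apply continuous_const).clm_apply continuous_const
  exact (h1.mul (BTW_vtc hv)).add ((BTW_vxc hv).mul h2)

lemma BTW_hq (x t : ℝ) :
    HasDerivAt (fun s => BTW_vx v (x, s) * BTW_vt v (x, s)) (BTW_P v (x, t)) t :=
  (BTW_hwdir hv x t (1,0)).mul (BTW_hwdir hv x t (0,1))

/-- Spatial trace identity at a time where the wave equation holds in the interior. -/
lemma BTW_trace (t : ℝ)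
    (hw : ∀ x ∈ Ioo (0:ℝ) 1, BTW_w2 v (x,t) (0,1) (0,1) = BTW_w2 v (x,t) (1,0) (1,0)) :
    BTW_vx v (1, t) ^ 2 + BTW_vt v (1, t) ^ 2
      = (∫ x in (0:ℝ)..1, (BTW_vx v (x,t) ^ 2 + BTW_vt v (x,t) ^ 2))
        + 2 * ∫ x in (0:ℝ)..1, x * BTW_P v (x,t) := by
  set g : ℝ → ℝ := fun x => x * (BTW_vx v (x,t) ^ 2 + BTW_vt v (x,t) ^ 2) with hg
  set g' : ℝ → ℝ := fun x =>
    (BTW_vx v (x,t) ^ 2 + BTW_vt v (x,t) ^ 2) + x * (2 * BTW_P v (x,t)) with hg'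
  have hcx : Continuous fun x : ℝ => BTW_vx v (x, t) :=
    (BTW_vxc hv).comp (continuous_id.prodMk continuous_const)
  have hct : Continuous fun x : ℝ => BTW_vt v (x, t) :=
    (BTW_vtc hv).comp (continuous_id.prodMk continuous_const)
  have hcP : Continuous fun x : ℝ => BTW_P v (x, t) :=
    (BTW_Pc hv).comp (continuous_id.prodMk continuous_const)
  have hdens_c : Continuous fun x : ℝ => BTW_vx v (x,t) ^ 2 + BTW_vt v (x,t) ^ 2 :=
    (hcx.pow 2).add (hct.pow 2)
  have hderiv : ∀ x ∈ Ioo (0:ℝ) 1, HasDerivAt g (g' x) x := by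
    intro x hx
    have h1 : HasDerivAt (fun y => BTW_vx v (y,t) ^ 2)
        (2 * BTW_vx v (x,t) ^ 1 * BTW_w2 v (x,t) (1,0) (1,0)) x :=
      (BTW_hwdirx hv x t (1,0)).pow 2
    have h2 : HasDerivAt (fun y => BTW_vt v (y,t) ^ 2)
        (2 * BTW_vt v (x,t) ^ 1 * BTW_w2 v (x,t) (1,0) (0,1)) x :=
      (BTW_hwdirx hv x t (0,1)).pow 2
    have h3 := (hasDerivAt_id x).mul (h1.add h2)
    refine h3.congr_deriv ?_; symm
    have e1 := hw x hx
    have e2 := BTW_symm hv (x,t) ((1:ℝ),(0:ℝ)) ((0:ℝ),(1:ℝ))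
    simp only [hg', BTW_P, id_eq, Pi.add_apply]
    rw [e2, ← e1]
    ring
  have hgcont : ContinuousOn g (Icc 0 1) :=
    ((continuous_id.mul hdens_c)).continuousOn
  have hg'int : IntervalIntegrable g' volume 0 1 :=
    (hdens_c.add (continuous_id.mul (continuous_const.mul hcP))).intervalIntegrable 0 1
  have hftc : ∫ x in (0:ℝ)..1, g' x = g 1 - g 0 :=
    integral_eq_sub_of_hasDeriv_right_of_le zero_le_one hgcont
      (fun x hx => (hderiv x hx).hasDerivWithinAt) hg'int
  have hsplit : ∫ x in (0:ℝ)..1, g' x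
      = (∫ x in (0:ℝ)..1, (BTW_vx v (x,t) ^ 2 + BTW_vt v (x,t) ^ 2))
        + ∫ x in (0:ℝ)..1, x * (2 * BTW_P v (x,t)) :=
    integral_add (hdens_c.intervalIntegrable 0 1)
      ((continuous_id.mul (continuous_const.mul hcP)).intervalIntegrable 0 1)
  have hpull : ∫ x in (0:ℝ)..1, x * (2 * BTW_P v (x,t))
      = 2 * ∫ x in (0:ℝ)..1, x * BTW_P v (x,t) := by
    rw [← intervalIntegral.integral_const_mul]
    congr 1; funext x; ring
  have hgval : g 1 - g 0 = BTW_vx v (1, t) ^ 2 + BTW_vt v (1, t) ^ 2 := by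
    simp [hg]
  rw [← hgval, ← hftc, hsplit, hpull]

/-- Differentiation under the integral sign. -/
lemma BTW_F_deriv (t₀ : ℝ) :
    HasDerivAt (fun t => ∫ x in (0:ℝ)..1, x * (BTW_vx v (x, t) * BTW_vt v (x, t)))
      (∫ x in (0:ℝ)..1, x * BTW_P v (x, t₀)) t₀ := by
  obtain ⟨C, hC⟩ : ∃ C, ∀ p ∈ Icc (0:ℝ) 1 ×ˢ Icc (t₀ - 1) (t₀ + 1),
      ‖p.1 * BTW_P v p‖ ≤ C :=
    (isCompact_Icc.prod isCompact_Icc).exists_bound_of_continuousOn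
      ((continuous_fst.mul (BTW_Pc hv)).continuousOn)
  have hIoc : Set.uIoc (0:ℝ) 1 = Ioc 0 1 := uIoc_of_le zero_le_one
  have hcont : ∀ t : ℝ, Continuous fun x : ℝ => x * (BTW_vx v (x, t) * BTW_vt v (x, t)) := by
    intro t
    exact continuous_id.mul
      (((BTW_vxc hv).comp (continuous_id.prodMk continuous_const)).mul
        ((BTW_vtc hv).comp (continuous_id.prodMk continuous_const)))
  have hP'cont : Continuous fun x : ℝ => x * BTW_P v (x, t₀) :=
    continuous_id.mul ((BTW_Pc hv).comp (continuous_id.prodMk continuous_const))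
  have := hasDerivAt_integral_of_dominated_loc_of_deriv_le (F := fun t x =>
      x * (BTW_vx v (x, t) * BTW_vt v (x, t))) (F' := fun t x => x * BTW_P v (x, t))
      (x₀ := t₀) (s := Metric.ball t₀ 1) (a := 0) (b := 1) (μ := volume) (bound := fun _ => C)
      (Metric.ball_mem_nhds t₀ one_pos)
      (Filter.Eventually.of_forall fun t => ((hcont t).aestronglyMeasurable).restrict)
      ((hcont t₀).intervalIntegrable 0 1)
      (hP'cont.aestronglyMeasurable.restrict)
      ?_ (intervalIntegrable_const) ?_
  · exact this.2
  · refine Filter.Eventually.of_forall fun x hx t ht => ?_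
    refine hC (x, t) ⟨?_, ?_⟩
    · rw [hIoc] at hx; exact Ioc_subset_Icc_self hx
    · have h0 : |t - t₀| < 1 := by simpa [Metric.mem_ball, Real.dist_eq] using ht
      have h1 := abs_sub_lt_iff.mp h0
      constructor <;> linarith [h1.1, h1.2]
  · refine Filter.Eventually.of_forall fun x _ t _ => ?_
    exact (BTW_hq hv x t).const_mul x

end BTWaux

lemma BTW_exp_int {c : ℝ} (hc : c < 0) {a b : ℝ} (hab : a ≤ b) :
    ∫ t in a..b, Real.exp (c * t) ≤ Real.exp (c * a) / (-c) := by
  have hc0 : c ≠ 0 := ne_of_lt hc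
  have hd : ∀ t ∈ uIcc a b, HasDerivAt (fun t => Real.exp (c * t) / c) (Real.exp (c * t)) t := by
    intro t _
    have := (((hasDerivAt_id t).const_mul c).exp).div_const c
    refine this.congr_deriv ?_; symm
    field_simp
    rfl
  have hint : IntervalIntegrable (fun t => Real.exp (c * t)) volume a b :=
    (Real.continuous_exp.comp (continuous_const.mul continuous_id)).intervalIntegrable a b
  rw [integral_eq_sub_of_hasDerivAt hd hint]
  have h1 : Real.exp (c * b) / c ≤ 0 :=
    div_nonpos_of_nonneg_of_nonpos (Real.exp_pos _).le hc.le
  have h2 : Real.exp (c * a) / (-c) = -(Real.exp (c * a) / c) := by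
    rw [div_neg]
  linarith

theorem boundary_trace_weighted_integrability (τ α μ M : ℝ)
    (hτ : 0 ≤ τ) (hα : 0 < α) (hμ : 0 < μ) (hαμ : α < 2 * μ) (hM : 0 < M)
    (v : ℝ → ℝ → ℝ)
    (hv : ContDiff ℝ 2 (Function.uncurry v))
    (hwave : ∀ x ∈ Ioo (0:ℝ) 1, ∀ t ∈ Ioi τ,
      deriv (deriv (v x)) t = deriv (deriv (fun y => v y t)) x)
    (henergy : ∀ t ∈ Ici τ,
      (∫ x in (0:ℝ)..1, ((deriv (fun y => v y t) x) ^ 2 + (deriv (v x) t) ^ 2))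
        ≤ M ^ 2 * Real.exp (-2 * μ * t)) :
    MeasureTheory.IntegrableOn
      (fun t => Real.exp (α * t) * ((deriv (fun y => v y t) 1) ^ 2 + (deriv (v 1) t) ^ 2))
      (Ici τ) := by
  -- notation
  set c : ℝ := α - 2*μ with hc
  have hcneg : c < 0 := by rw [hc]; linarith
  set K : ℝ := M^2 * Real.exp (c * τ) with hK
  have hexpc : ∀ t : ℝ, Real.exp (α*t) * Real.exp (-2*μ*t) = Real.exp (c*t) := by
    intro t; rw [← Real.exp_add]; congr 1; rw [hc]; ring
  have hexp : Continuous fun t : ℝ => Real.exp (α * t) :=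
    Real.continuous_exp.comp (continuous_const.mul continuous_id)
  have hexpc_cont : Continuous fun t : ℝ => Real.exp (c * t) :=
    Real.continuous_exp.comp (continuous_const.mul continuous_id)
  -- the three parametric integrals
  set E : ℝ → ℝ := fun t => ∫ x in (0:ℝ)..1, (BTW_vx v (x,t)^2 + BTW_vt v (x,t)^2) with hEdef
  set F : ℝ → ℝ := fun t => ∫ x in (0:ℝ)..1, x * (BTW_vx v (x,t) * BTW_vt v (x,t)) with hFdef
  set Q : ℝ → ℝ := fun t => ∫ x in (0:ℝ)..1, x * BTW_P v (x,t) with hQdef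
  -- continuity facts
  have hswap_vx : Continuous fun p : ℝ × ℝ => BTW_vx v (p.2, p.1) :=
    (BTW_vxc hv).comp (continuous_snd.prodMk continuous_fst)
  have hswap_vt : Continuous fun p : ℝ × ℝ => BTW_vt v (p.2, p.1) :=
    (BTW_vtc hv).comp (continuous_snd.prodMk continuous_fst)
  have hswap_P : Continuous fun p : ℝ × ℝ => BTW_P v (p.2, p.1) :=
    (BTW_Pc hv).comp (continuous_snd.prodMk continuous_fst)
  have hEcont : Continuous E := by
    rw [hEdef]
    exact continuous_parametric_intervalIntegral_of_continuous'
      (f := fun (t : ℝ) (x : ℝ) => BTW_vx v (x,t)^2 + BTW_vt v (x,t)^2)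
      (μ := volume) (by
        show Continuous fun p : ℝ × ℝ => BTW_vx v (p.2, p.1)^2 + BTW_vt v (p.2, p.1)^2
        fun_prop) 0 1
  have hFcont : Continuous F := by
    rw [hFdef]
    exact continuous_parametric_intervalIntegral_of_continuous'
      (f := fun (t : ℝ) (x : ℝ) => x * (BTW_vx v (x,t) * BTW_vt v (x,t)))
      (μ := volume) (continuous_snd.mul (hswap_vx.mul hswap_vt)) 0 1
  have hQcont : Continuous Q := by
    rw [hQdef]
    exact continuous_parametric_intervalIntegral_of_continuous'
      (f := fun (t : ℝ) (x : ℝ) => x * BTW_P v (x,t))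
      (μ := volume) (continuous_snd.mul hswap_P) 0 1
  -- energy bound
  have hEbound : ∀ t, τ ≤ t → E t ≤ M^2 * Real.exp (-2*μ*t) := by
    intro t ht
    have h := henergy t ht
    have heq : (∫ x in (0:ℝ)..1, ((deriv (fun y => v y t) x) ^ 2 + (deriv (v x) t) ^ 2))
        = E t := by
      simp only [hEdef]
      apply integral_congr
      intro x _
      show deriv (fun y => v y t) x ^ 2 + deriv (v x) t ^ 2
        = BTW_vx v (x,t) ^ 2 + BTW_vt v (x,t) ^ 2
      rw [(BTW_hx hv x t).deriv, (BTW_ht hv x t).deriv]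
    linarith [heq ▸ h]
  -- |F| ≤ E/2
  have hFE : ∀ t : ℝ, |F t| ≤ E t / 2 := by
    intro t
    have hcont_t : Continuous fun x : ℝ => x * (BTW_vx v (x,t) * BTW_vt v (x,t)) :=
      continuous_id.mul
        (((BTW_vxc hv).comp (continuous_id.prodMk continuous_const)).mul
          ((BTW_vtc hv).comp (continuous_id.prodMk continuous_const)))
    have hdens : Continuous fun x : ℝ => BTW_vx v (x,t)^2 + BTW_vt v (x,t)^2 :=
      (((BTW_vxc hv).comp (continuous_id.prodMk continuous_const)).pow 2).add
        (((BTW_vtc hv).comp (continuous_id.prodMk continuous_const)).pow 2)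
    have habs : |F t| ≤ ∫ x in (0:ℝ)..1, |x * (BTW_vx v (x,t) * BTW_vt v (x,t))| := by
      simp only [hFdef]
      exact abs_integral_le_integral_abs zero_le_one
    have hmono : (∫ x in (0:ℝ)..1, |x * (BTW_vx v (x,t) * BTW_vt v (x,t))|)
        ≤ ∫ x in (0:ℝ)..1, (BTW_vx v (x,t)^2 + BTW_vt v (x,t)^2) / 2 := by
      apply integral_mono_on zero_le_one (hcont_t.abs.intervalIntegrable 0 1)
        ((hdens.div_const 2).intervalIntegrable 0 1)
      intro x hx
      have hx1 : |x| ≤ 1 := abs_le.mpr ⟨by linarith [hx.1], hx.2⟩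
      rw [abs_mul, abs_mul]
      nlinarith [sq_nonneg (|BTW_vx v (x,t)| - |BTW_vt v (x,t)|), sq_abs (BTW_vx v (x,t)),
        sq_abs (BTW_vt v (x,t)), abs_nonneg (BTW_vx v (x,t)), abs_nonneg (BTW_vt v (x,t)),
        mul_nonneg (abs_nonneg (BTW_vx v (x,t))) (abs_nonneg (BTW_vt v (x,t)))]
    have hdiv : (∫ x in (0:ℝ)..1, (BTW_vx v (x,t)^2 + BTW_vt v (x,t)^2) / 2) = E t / 2 := by
      simp only [hEdef]
      exact integral_div 2 _
    linarith
  -- wave equation in fderiv form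
  have hwaveW : ∀ t, τ < t → ∀ x ∈ Ioo (0:ℝ) 1,
      BTW_w2 v (x,t) (0,1) (0,1) = BTW_w2 v (x,t) (1,0) (1,0) := by
    intro t ht x hx
    have e1 : deriv (v x) = fun s => BTW_vt v (x, s) := funext fun s => (BTW_ht hv x s).deriv
    have e2 : deriv (fun y => v y t) = fun y => BTW_vx v (y, t) :=
      funext fun y => (BTW_hx hv y t).deriv
    have h := hwave x hx t ht
    rw [e1, e2, (BTW_hvt_t hv x t).deriv, (BTW_hvx_x hv x t).deriv] at h
    exact h
  -- trace identity
  have htrace : ∀ t, τ < t →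
      BTW_vx v (1,t)^2 + BTW_vt v (1,t)^2 = E t + 2 * Q t := by
    intro t ht
    have h := BTW_trace hv t (hwaveW t ht)
    simpa only [hEdef, hQdef] using h
  -- rewrite the goal
  have hgoal : (fun t => Real.exp (α * t) *
        ((deriv (fun y => v y t) 1) ^ 2 + (deriv (v 1) t) ^ 2))
      = fun t => Real.exp (α*t) * (BTW_vx v (1,t)^2 + BTW_vt v (1,t)^2) :=
    funext fun t => by rw [(BTW_hx hv 1 t).deriv, (BTW_ht hv 1 t).deriv]
  rw [hgoal, integrableOn_Ici_iff_integrableOn_Ioi]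
  set f₀ : ℝ → ℝ := fun t => Real.exp (α*t) * (BTW_vx v (1,t)^2 + BTW_vt v (1,t)^2) with hf₀def
  have hf₀cont : Continuous f₀ :=
    hexp.mul ((((BTW_vxc hv).comp (continuous_const.prodMk continuous_id)).pow 2).add
      (((BTW_vtc hv).comp (continuous_const.prodMk continuous_id)).pow 2))
  set Cb : ℝ := K/(-c) + 2*(K/2 + K/2 + α*(K/(-c))/2) with hCb
  refine MeasureTheory.integrableOn_Ioi_of_intervalIntegral_norm_bounded
    (l := Filter.atTop) (b := fun T : ℝ => T) Cb τ
    (fun i => (hf₀cont.integrableOn_Icc).mono_set Ioc_subset_Icc_self) Filter.tendsto_id ?_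
  filter_upwards [Filter.eventually_ge_atTop τ] with T hT
  have hnormeq : (∫ t in τ..T, ‖f₀ t‖) = ∫ t in τ..T, f₀ t := by
    apply integral_congr
    intro t _
    simp only [hf₀def]
    exact Real.norm_of_nonneg (by positivity)
  -- split off the flux term
  have hsplit : (∫ t in τ..T, f₀ t)
      = (∫ t in τ..T, Real.exp (α*t) * E t) + 2 * ∫ t in τ..T, Real.exp (α*t) * Q t := by
    have h1 : (∫ t in τ..T, f₀ t)
        = ∫ t in τ..T, (Real.exp (α*t) * E t + 2 * (Real.exp (α*t) * Q t)) := by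
      rw [integral_of_le hT, integral_of_le hT]
      refine setIntegral_congr_fun measurableSet_Ioc fun t ht => ?_
      have h2 := htrace t ht.1
      simp only [hf₀def]
      rw [h2]; ring
    rw [h1, integral_add (f := fun t => Real.exp (α*t) * E t)
      (g := fun t => 2 * (Real.exp (α*t) * Q t)) ((hexp.mul hEcont).intervalIntegrable τ T)
      ((continuous_const.mul (hexp.mul hQcont)).intervalIntegrable τ T),
      intervalIntegral.integral_const_mul]
  -- integration by parts in time
  have hparts : (∫ t in τ..T, Real.exp (α*t) * Q t)
      = Real.exp (α*T) * F T - Real.exp (α*τ) * F τ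
        - ∫ t in τ..T, (Real.exp (α*t) * α) * F t := by
    apply intervalIntegral.integral_mul_deriv_eq_deriv_mul
      (u := fun t => Real.exp (α*t)) (u' := fun t => Real.exp (α*t) * α)
      (v := F) (v' := Q)
    · intro t _
      simpa using ((hasDerivAt_id t).const_mul α).exp
    · intro t _
      exact BTW_F_deriv hv t
    · exact ((hexp.mul continuous_const).intervalIntegrable τ T)
    · exact hQcont.intervalIntegrable τ T
  -- bounds
  have hA : (∫ t in τ..T, Real.exp (α*t) * E t) ≤ K / (-c) := by
    have hmono : (∫ t in τ..T, Real.exp (α*t) * E t)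
        ≤ ∫ t in τ..T, M^2 * Real.exp (c*t) := by
      apply integral_mono_on hT ((hexp.mul hEcont).intervalIntegrable τ T)
        ((continuous_const.mul hexpc_cont).intervalIntegrable τ T)
      intro t ht
      calc Real.exp (α*t) * E t
          ≤ Real.exp (α*t) * (M^2 * Real.exp (-2*μ*t)) :=
            mul_le_mul_of_nonneg_left (hEbound t ht.1) (Real.exp_pos _).le
        _ = M^2 * (Real.exp (α*t) * Real.exp (-2*μ*t)) := by ring
        _ = M^2 * Real.exp (c*t) := by rw [hexpc t]
    have h3 : (∫ t in τ..T, M^2 * Real.exp (c*t)) = M^2 * ∫ t in τ..T, Real.exp (c*t) :=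
      integral_const_mul _ _
    have h4 := BTW_exp_int hcneg hT
    have h5 : M^2 * (∫ t in τ..T, Real.exp (c*t)) ≤ M^2 * (Real.exp (c*τ)/(-c)) :=
      mul_le_mul_of_nonneg_left h4 (by positivity)
    have h6 : M^2 * (Real.exp (c*τ)/(-c)) = K/(-c) := by rw [hK, mul_div_assoc]
    linarith [hmono, h3 ▸ hmono]
  have hKt : ∀ t, τ ≤ t → Real.exp (α*t) * (E t / 2) ≤ K / 2 := by
    intro t ht
    have h2 := hEbound t ht
    have hct : Real.exp (c*t) ≤ Real.exp (c*τ) :=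
      Real.exp_le_exp.mpr (by nlinarith)
    calc Real.exp (α*t) * (E t / 2)
        ≤ Real.exp (α*t) * (M^2 * Real.exp (-2*μ*t) / 2) :=
          mul_le_mul_of_nonneg_left (by linarith) (Real.exp_pos _).le
      _ = M^2 * (Real.exp (α*t) * Real.exp (-2*μ*t)) / 2 := by ring
      _ = M^2 * Real.exp (c*t) / 2 := by rw [hexpc t]
      _ ≤ K / 2 := by rw [hK]; nlinarith [sq_nonneg M]
  have hB1 : Real.exp (α*T) * F T ≤ K/2 := by
    have h1 : F T ≤ E T / 2 := le_trans (le_abs_self _) (hFE T)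
    calc Real.exp (α*T) * F T ≤ Real.exp (α*T) * (E T / 2) :=
          mul_le_mul_of_nonneg_left h1 (Real.exp_pos _).le
      _ ≤ K/2 := hKt T hT
  have hB2 : -(Real.exp (α*τ) * F τ) ≤ K/2 := by
    have h1 : -F τ ≤ E τ / 2 := le_trans (neg_le_abs _) (hFE τ)
    calc -(Real.exp (α*τ) * F τ) = Real.exp (α*τ) * (-F τ) := by ring
      _ ≤ Real.exp (α*τ) * (E τ / 2) :=
          mul_le_mul_of_nonneg_left h1 (Real.exp_pos _).le
      _ ≤ K/2 := hKt τ le_rfl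
  have hB3 : -(∫ t in τ..T, (Real.exp (α*t) * α) * F t) ≤ α*(K/(-c))/2 := by
    have habs : |∫ t in τ..T, (Real.exp (α*t) * α) * F t|
        ≤ ∫ t in τ..T, |(Real.exp (α*t) * α) * F t| :=
      abs_integral_le_integral_abs hT
    have hmono : (∫ t in τ..T, |(Real.exp (α*t) * α) * F t|)
        ≤ ∫ t in τ..T, (α * M^2 / 2) * Real.exp (c*t) := by
      apply integral_mono_on hT (((hexp.mul continuous_const).mul hFcont).abs.intervalIntegrable τ T)
        ((continuous_const.mul hexpc_cont).intervalIntegrable τ T)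
      intro t ht
      have h2 := hEbound t ht.1
      have h6 := hFE t
      have hEt2 : |F t| ≤ M^2 * Real.exp (-2*μ*t) / 2 := by linarith
      calc |(Real.exp (α*t) * α) * F t| = (Real.exp (α*t) * α) * |F t| := by
            rw [abs_mul, abs_of_nonneg (by positivity : (0:ℝ) ≤ Real.exp (α*t) * α)]
        _ ≤ (Real.exp (α*t) * α) * (M^2 * Real.exp (-2*μ*t) / 2) :=
            mul_le_mul_of_nonneg_left hEt2 (by positivity)
        _ = (α * M^2 / 2) * (Real.exp (α*t) * Real.exp (-2*μ*t)) := by ring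
        _ = (α * M^2 / 2) * Real.exp (c*t) := by rw [hexpc t]
    have h7 : (∫ t in τ..T, (α*M^2/2) * Real.exp (c*t))
        = (α*M^2/2) * ∫ t in τ..T, Real.exp (c*t) := integral_const_mul _ _
    have h4 := BTW_exp_int hcneg hT
    have h8 : (α*M^2/2) * (∫ t in τ..T, Real.exp (c*t)) ≤ (α*M^2/2) * (Real.exp (c*τ)/(-c)) :=
      mul_le_mul_of_nonneg_left h4 (by positivity)
    have h9 : -(∫ t in τ..T, (Real.exp (α*t) * α) * F t)
        ≤ |∫ t in τ..T, (Real.exp (α*t) * α) * F t| := neg_le_abs _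
    have h10 : α*(K/(-c))/2 = (α*M^2/2) * (Real.exp (c*τ)/(-c)) := by rw [hK]; ring
    linarith [h7 ▸ hmono]
  calc (∫ t in τ..T, ‖f₀ t‖) = ∫ t in τ..T, f₀ t := hnormeq
    _ = (∫ t in τ..T, Real.exp (α*t) * E t)
        + 2 * (Real.exp (α*T) * F T - Real.exp (α*τ) * F τ
          - ∫ t in τ..T, (Real.exp (α*t) * α) * F t) := by rw [hsplit, hparts]
    _ ≤ Cb := by rw [hCb]; linarith
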